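/- arXiv:1911.09876 — 4 statements merged into one kernel-verified Lean document; each statement's English description precedes it below -/
import Mathlib

section
/- With measurement error, the expected squared residual of the population least-squares predictor equals (Λβ)^T Σ_z (Λβ) + ((I-Λ)β)^T Σ_u ((I-Λ)β), where Λ = (Σ_z + Σ_u)^{-1} Σ_u. -/
/-!
The residual is `y - ŷ = (Λβ) ⬝ᵥ (z - E z) - ((1 - Λ)β) ⬝ᵥ u`, a function of `z` minus a centred
function of `u`. Independence kills the cross term of its square, and the second moment of a
linear form `a ⬝ᵥ (V - E V)` is `a ⬝ᵥ Σ_V a`.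
-/

open MeasureTheory ProbabilityTheory Matrix

/-- Mean vector of a random vector. -/
noncomputable def meanV {Ω : Type*} [MeasurableSpace Ω] (P : Measure Ω) {d : ℕ}
    (z : Ω → Fin d → ℝ) : Fin d → ℝ := fun i => ∫ ω, z ω i ∂P

/-- Covariance matrix of a random vector. -/
noncomputable def covM {Ω : Type*} [MeasurableSpace Ω] (P : Measure Ω) {d : ℕ}
    (z : Ω → Fin d → ℝ) : Matrix (Fin d) (Fin d) ℝ :=
  Matrix.of fun i j => ∫ ω, (z ω i - meanV P z i) * (z ω j - meanV P z j) ∂P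

open scoped ENNReal

section

variable {Ω : Type*} [MeasurableSpace Ω] {P : Measure Ω} {d : ℕ}

lemma memLp_dotProduct {p : ℝ≥0∞} {V : Ω → Fin d → ℝ} (hV : ∀ i, MemLp (fun ω => V ω i) p P)
    (a : Fin d → ℝ) : MemLp (fun ω => a ⬝ᵥ V ω) p P :=
  memLp_finsetSum _ fun i _ => (hV i).const_mul (a i)

lemma integral_dotProduct {V : Ω → Fin d → ℝ} (hV : ∀ i, Integrable (fun ω => V ω i) P)
    (a : Fin d → ℝ) : ∫ ω, a ⬝ᵥ V ω ∂P = a ⬝ᵥ meanV P V := by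
  simp only [dotProduct]
  rw [integral_finsetSum _ fun i _ => (hV i).const_mul (a i)]
  simp only [integral_const_mul, meanV]

lemma integral_dotProduct_sub_meanV_sq [IsFiniteMeasure P] {V : Ω → Fin d → ℝ}
    (hV : ∀ i, MemLp (fun ω => V ω i) 2 P) (a : Fin d → ℝ) :
    ∫ ω, (a ⬝ᵥ (V ω - meanV P V)) ^ 2 ∂P = a ⬝ᵥ (covM P V *ᵥ a) := by
  set W : Fin d → Ω → ℝ := fun i ω => V ω i - meanV P V i
  have hW : ∀ i, MemLp (W i) 2 P := fun i => (hV i).sub (memLp_const _)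
  have hWW : ∀ i j, Integrable (fun ω => a i * a j * (W i ω * W j ω)) P := fun i j =>
    ((hW i).integrable_mul (hW j)).const_mul _
  have hsq : ∀ ω, (a ⬝ᵥ (V ω - meanV P V)) ^ 2 = ∑ i, ∑ j, a i * a j * (W i ω * W j ω) := by
    intro ω
    simp only [sq, dotProduct, Finset.sum_mul_sum, Pi.sub_apply, W]
    exact Finset.sum_congr rfl fun i _ => Finset.sum_congr rfl fun j _ => by ring
  simp_rw [hsq]
  rw [integral_finsetSum _ fun i _ => integrable_finsetSum _ fun j _ => hWW i j]
  simp_rw [integral_finsetSum _ fun j _ => hWW _ j, integral_const_mul]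
  simp only [dotProduct, mulVec, Finset.mul_sum, covM, of_apply, W]
  exact Finset.sum_congr rfl fun i _ => Finset.sum_congr rfl fun j _ => by ring

lemma integral_sub_sq_of_indepFun {X Y : Ω → ℝ} (hXY : IndepFun X Y P) (hX : MemLp X 2 P)
    (hY : MemLp Y 2 P) (hY0 : ∫ ω, Y ω ∂P = 0) :
    ∫ ω, (X ω - Y ω) ^ 2 ∂P = ∫ ω, X ω ^ 2 ∂P + ∫ ω, Y ω ^ 2 ∂P := by
  have hXY0 : ∫ ω, X ω * Y ω ∂P = 0 := by
    simpa [hY0] using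
      hXY.integral_mul_eq_mul_integral hX.aestronglyMeasurable hY.aestronglyMeasurable
  have hX2 : Integrable (fun ω => X ω ^ 2) P := hX.integrable_sq
  have hXY2 : Integrable (fun ω => 2 * (X ω * Y ω)) P := (hX.integrable_mul hY).const_mul 2
  have hdiff : Integrable (fun ω => X ω ^ 2 - 2 * (X ω * Y ω)) P := hX2.sub hXY2
  calc ∫ ω, (X ω - Y ω) ^ 2 ∂P
      = ∫ ω, (X ω ^ 2 - 2 * (X ω * Y ω)) + Y ω ^ 2 ∂P := by congr 1; ext ω; ring
    _ = ∫ ω, X ω ^ 2 ∂P + ∫ ω, Y ω ^ 2 ∂P := by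
      rw [integral_add hdiff hY.integrable_sq, integral_sub hX2 hXY2,
        integral_const_mul, hXY0, mul_zero, sub_zero]

end

theorem stmt_3_general {Ω : Type*} [MeasurableSpace Ω] (P : Measure Ω) [IsProbabilityMeasure P]
    {d : ℕ} (z u x : Ω → Fin d → ℝ) (y yhat : Ω → ℝ) (β : Fin d → ℝ) (α : ℝ)
    (Λ : Matrix (Fin d) (Fin d) ℝ)
    (hx : ∀ ω, x ω = fun i => z ω i + u ω i)
    (hy : ∀ ω, y ω = β ⬝ᵥ z ω + α)
    (hindep : IndepFun z u P)
    (hzL2 : ∀ i, MemLp (fun ω => z ω i) 2 P)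
    (huL2 : ∀ i, MemLp (fun ω => u ω i) 2 P)
    (hu0 : ∀ i, ∫ ω, u ω i ∂P = 0)
    (hyhat : ∀ ω, yhat ω = ((1 - Λ) *ᵥ β) ⬝ᵥ x ω + (Λ *ᵥ β) ⬝ᵥ meanV P z + α) :
    ∫ ω, (y ω - yhat ω) ^ 2 ∂P =
      (Λ *ᵥ β) ⬝ᵥ (covM P z *ᵥ (Λ *ᵥ β)) +
        ((1 - Λ) *ᵥ β) ⬝ᵥ (covM P u *ᵥ ((1 - Λ) *ᵥ β)) := by
  set a := Λ *ᵥ β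
  set b := (1 - Λ) *ᵥ β
  have hab : a + b = β := by simp [a, b, sub_mulVec]
  have hmean_u : meanV P u = 0 := funext hu0
  have hres : ∀ ω, y ω - yhat ω = a ⬝ᵥ (z ω - meanV P z) - b ⬝ᵥ u ω := fun ω => by
    rw [hy, hyhat, hx, ← hab]
    change _ - ((b ⬝ᵥ (z ω + u ω)) + _ + _) = _
    simp only [add_dotProduct, dotProduct_add, dotProduct_sub]
    ring
  have hz_centered : ∀ i, MemLp (fun ω => (z ω - meanV P z) i) 2 P :=
    fun i => (hzL2 i).sub (memLp_const _)
  have hindep_res : IndepFun (fun ω => a ⬝ᵥ (z ω - meanV P z)) (fun ω => b ⬝ᵥ u ω) P :=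
    hindep.comp (φ := fun v => a ⬝ᵥ (v - meanV P z)) (ψ := fun v => b ⬝ᵥ v)
      (by fun_prop) (by fun_prop)
  have hmean_bu : ∫ ω, b ⬝ᵥ u ω ∂P = 0 := by
    rw [integral_dotProduct (fun i => (huL2 i).integrable one_le_two), hmean_u, dotProduct_zero]
  simp_rw [hres]
  rw [integral_sub_sq_of_indepFun hindep_res (memLp_dotProduct hz_centered a)
      (memLp_dotProduct huL2 b) hmean_bu, integral_dotProduct_sub_meanV_sq hzL2,
    ← integral_dotProduct_sub_meanV_sq huL2, hmean_u]
  simp only [sub_zero]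

/-- Measurement-error setup: the expected squared residual of the population
least-squares predictor equals `(Λβ)ᵀΣ_z(Λβ) + ((I-Λ)β)ᵀΣ_u((I-Λ)β)`. -/
theorem stmt_3 {Ω : Type*} [MeasurableSpace Ω] (P : Measure Ω) [IsProbabilityMeasure P]
    {d : ℕ} (z u x : Ω → Fin d → ℝ) (y yhat : Ω → ℝ) (β : Fin d → ℝ) (α : ℝ)
    (Λ : Matrix (Fin d) (Fin d) ℝ)
    (hx : ∀ ω, x ω = fun i => z ω i + u ω i)
    (hy : ∀ ω, y ω = β ⬝ᵥ z ω + α)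
    (hindep : IndepFun z u P)
    (hzL2 : ∀ i, MemLp (fun ω => z ω i) 2 P)
    (huL2 : ∀ i, MemLp (fun ω => u ω i) 2 P)
    (hu0 : ∀ i, ∫ ω, u ω i ∂P = 0)
    (hinv : IsUnit (covM P z + covM P u).det)
    (hΛ : Λ = (covM P z + covM P u)⁻¹ * covM P u)
    (hyhat : ∀ ω, yhat ω = ((1 - Λ) *ᵥ β) ⬝ᵥ x ω + (Λ *ᵥ β) ⬝ᵥ meanV P z + α) :
    ∫ ω, (y ω - yhat ω) ^ 2 ∂P =
      (Λ *ᵥ β) ⬝ᵥ (covM P z *ᵥ (Λ *ᵥ β)) +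
        ((1 - Λ) *ᵥ β) ⬝ᵥ (covM P u *ᵥ ((1 - Λ) *ᵥ β)) :=
  stmt_3_general P z u x y yhat β α Λ hx hy hindep hzL2 huL2 hu0 hyhat
end

section
/- In the two-group measurement-error model without group information, the statistical loss discrepancy based on squared error equals |(Λβ)^T ΔΣ_z (Λβ) - (P[g=1] - P[g=0])((Λβ)^T Δμ_z)²|, where ΔΣ_z = Var[z|g=1] - Var[z|g=0]. -/
/-!
The residual is `y - ŷ = (Λβ)ᵀ(z - E z) - ((1 - Λ)β)ᵀ u`. Since `u` is centred and independent
of `(z, g)`, the cross term vanishes within each group, so the risk of group `g = s` is the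
variance of `(Λβ)ᵀ z` in that group, plus the squared gap `(mₛ - m)²` between the group mean `mₛ`
and the overall mean `m` of `(Λβ)ᵀ z`, plus a noise term common to both groups. With `p = P[g = 1]` the overall mean
is `m = p m₁ + (1 - p) m₀`, so the gaps are `(1 - p)(m₁ - m₀)` and `-p(m₁ - m₀)`, and the
difference of their squares is `(1 - 2p)(m₁ - m₀)²`.
-/

open MeasureTheory ProbabilityTheory Matrix

section

variable {Ω : Type*} [MeasurableSpace Ω] {μ : Measure Ω}

section Cond

variable {s : Set Ω} {f : Ω → ℝ}

lemma integral_cond_eq_inv_mul_setIntegral :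
    ∫ ω, f ω ∂μ[|s] = (μ.real s)⁻¹ * ∫ ω in s, f ω ∂μ := by
  rw [ProbabilityTheory.cond, integral_smul_measure, ENNReal.toReal_inv, smul_eq_mul,
    measureReal_def]

lemma measureReal_mul_integral_cond [IsFiniteMeasure μ] :
    μ.real s * ∫ ω, f ω ∂μ[|s] = ∫ ω in s, f ω ∂μ := by
  rcases eq_or_ne (μ s) 0 with hs | hs
  · simp [Measure.restrict_eq_zero.mpr hs, measureReal_def, hs]
  · rw [integral_cond_eq_inv_mul_setIntegral, ← mul_assoc,
      mul_inv_cancel₀ ((measureReal_ne_zero_iff).mpr hs), one_mul]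

lemma integral_eq_measureReal_mul_integral_cond_add [IsFiniteMeasure μ] (hs : MeasurableSet s)
    (hf : Integrable f μ) :
    ∫ ω, f ω ∂μ = μ.real s * ∫ ω, f ω ∂μ[|s] + μ.real sᶜ * ∫ ω, f ω ∂μ[|sᶜ] := by
  rw [measureReal_mul_integral_cond, measureReal_mul_integral_cond, integral_add_compl hs hf]

lemma MeasureTheory.MemLp.cond {p : ENNReal} (hf : MemLp f p μ) : MemLp f p μ[|s] := by
  rcases eq_or_ne (μ s) 0 with hs | hs
  · simp [cond_eq_zero_of_meas_eq_zero hs]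
  · exact (hf.restrict s).smul_measure (ENNReal.inv_ne_top.mpr hs)

end Cond

lemma integral_sub_const_sq [IsProbabilityMeasure μ] {X : Ω → ℝ} (hX : MemLp X 2 μ) (c : ℝ) :
    ∫ ω, (X ω - c) ^ 2 ∂μ = Var[X; μ] + (μ[X] - c) ^ 2 := by
  have h := variance_eq_sub (X := fun ω => X ω - c) (hX.sub (memLp_const c))
  rw [variance_sub_const hX.aestronglyMeasurable,
    integral_sub (hX.integrable one_le_two) (integrable_const c)] at h
  simp only [Pi.pow_apply, integral_const, probReal_univ, one_smul] at h
  linarith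

section Independence

variable {𝓧 𝓨 : Type*} [MeasurableSpace 𝓧] [MeasurableSpace 𝓨] {X : Ω → 𝓧} {Y : Ω → 𝓨}
  {S : Set 𝓧} {φ : 𝓧 → ℝ} {ψ : 𝓨 → ℝ}

lemma ProbabilityTheory.IndepFun.setIntegral_comp_mul_comp (hXY : IndepFun X Y μ)
    (hX : AEMeasurable X μ) (hY : AEMeasurable Y μ) (hS : MeasurableSet S)
    (hXS : MeasurableSet (X ⁻¹' S)) (hφ : Measurable φ) (hψ : Measurable ψ) :
    ∫ ω in X ⁻¹' S, φ (X ω) * ψ (Y ω) ∂μ = (∫ ω in X ⁻¹' S, φ (X ω) ∂μ) * ∫ ω, ψ (Y ω) ∂μ := by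
  have hcomp : ∀ F : 𝓧 → ℝ,
      (X ⁻¹' S).indicator (fun ω => F (X ω)) = fun ω => S.indicator F (X ω) :=
    fun F => by ext ω; by_cases h : X ω ∈ S <;> simp [h]
  simp only [← integral_indicator hXS, Set.indicator_mul_left, hcomp]
  exact (hXY.comp (hφ.indicator hS) hψ).integral_fun_mul_eq_mul_integral
    ((hφ.indicator hS).comp_aemeasurable hX).aestronglyMeasurable
    (hψ.comp_aemeasurable hY).aestronglyMeasurable

lemma ProbabilityTheory.IndepFun.integral_cond_sub_sq [IsFiniteMeasure μ] (hXY : IndepFun X Y μ)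
    (hX : AEMeasurable X μ) (hY : AEMeasurable Y μ) (hS : MeasurableSet S)
    (hXS : MeasurableSet (X ⁻¹' S)) (hXS₀ : μ (X ⁻¹' S) ≠ 0)
    (hφ : Measurable φ) (hψ : Measurable ψ) (hφX : MemLp (fun ω => φ (X ω)) 2 μ)
    (hψY : MemLp (fun ω => ψ (Y ω)) 2 μ) (hψY₀ : ∫ ω, ψ (Y ω) ∂μ = 0) :
    ∫ ω, (φ (X ω) - ψ (Y ω)) ^ 2 ∂μ[|X ⁻¹' S] =
      ∫ ω, φ (X ω) ^ 2 ∂μ[|X ⁻¹' S] + ∫ ω, ψ (Y ω) ^ 2 ∂μ := by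
  have hcross : ∫ ω in X ⁻¹' S, φ (X ω) * ψ (Y ω) ∂μ = 0 := by
    rw [hXY.setIntegral_comp_mul_comp hX hY hS hXS hφ hψ, hψY₀, mul_zero]
  have hnoise :
      ∫ ω in X ⁻¹' S, ψ (Y ω) ^ 2 ∂μ = μ.real (X ⁻¹' S) * ∫ ω, ψ (Y ω) ^ 2 ∂μ := by
    simpa [setIntegral_const] using hXY.setIntegral_comp_mul_comp hX hY hS hXS
      (measurable_const (a := (1 : ℝ))) (hψ.pow_const 2)
  have hsq : ∀ ω, (φ (X ω) - ψ (Y ω)) ^ 2 =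
      φ (X ω) ^ 2 - 2 * (φ (X ω) * ψ (Y ω)) + ψ (Y ω) ^ 2 := fun ω => by ring
  have hφφ : Integrable (fun ω => φ (X ω) ^ 2) (μ.restrict (X ⁻¹' S)) :=
    hφX.integrable_sq.restrict
  have hφψ : Integrable (fun ω => 2 * (φ (X ω) * ψ (Y ω))) (μ.restrict (X ⁻¹' S)) :=
    ((hφX.integrable_mul hψY).const_mul 2).restrict
  have hψψ : Integrable (fun ω => ψ (Y ω) ^ 2) (μ.restrict (X ⁻¹' S)) :=
    hψY.integrable_sq.restrict
  simp only [integral_cond_eq_inv_mul_setIntegral, hsq]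
  rw [integral_add (by exact hφφ.sub hφψ) hψψ, integral_sub hφφ hφψ, integral_const_mul, hcross,
    hnoise]
  field_simp [(measureReal_ne_zero_iff).mpr hXS₀]
  ring

end Independence

section RandomVector

variable {d : ℕ} {z u : Ω → Fin d → ℝ} (a : Fin d → ℝ)

lemma memLp_dotProduct_s6 {p : ENNReal} (hz : ∀ i, MemLp (fun ω => z ω i) p μ) :
    MemLp (fun ω => a ⬝ᵥ z ω) p μ :=
  memLp_finsetSum Finset.univ fun i _ => (hz i).const_mul (a i)

lemma integral_dotProduct_s6 (hz : ∀ i, Integrable (fun ω => z ω i) μ) :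
    ∫ ω, a ⬝ᵥ z ω ∂μ = a ⬝ᵥ meanV μ z := by
  simp only [dotProduct]
  rw [integral_finsetSum _ fun i _ => (hz i).const_mul (a i)]
  simp only [meanV, integral_const_mul]

lemma dotProduct_covM_mulVec [IsFiniteMeasure μ] (hz : ∀ i, MemLp (fun ω => z ω i) 2 μ) :
    a ⬝ᵥ (covM μ z *ᵥ a) = Var[fun ω => a ⬝ᵥ z ω; μ] := by
  rw [show (fun ω => a ⬝ᵥ z ω) = fun ω => ∑ i, a i * z ω i from rfl,
    variance_fun_sum fun i => (hz i).const_mul (a i)]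
  simp only [covariance_const_mul_left, covariance_const_mul_right, dotProduct, mulVec,
    Finset.mul_sum]
  refine Finset.sum_congr rfl fun i _ => Finset.sum_congr rfl fun j _ => ?_
  simp only [covM, of_apply, covariance, meanV]
  ring

lemma meanV_eq_measureReal_smul_meanV_cond_add [IsFiniteMeasure μ] {s : Set Ω}
    (hs : MeasurableSet s) (hz : ∀ i, Integrable (fun ω => z ω i) μ) :
    meanV μ z = μ.real s • meanV μ[|s] z + μ.real sᶜ • meanV μ[|sᶜ] z :=
  funext fun i => integral_eq_measureReal_mul_integral_cond_add hs (hz i)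

lemma integral_cond_sq_dotProduct_sub_sub_dotProduct [IsFiniteMeasure μ] {𝓖 : Type*}
    [MeasurableSpace 𝓖] {g : Ω → 𝓖} (hindep : IndepFun (fun ω => (z ω, g ω)) u μ)
    (hg : Measurable g) {T : Set 𝓖} (hT : MeasurableSet T) (hT₀ : μ (g ⁻¹' T) ≠ 0)
    (hz : ∀ i, MemLp (fun ω => z ω i) 2 μ) (hu : ∀ i, MemLp (fun ω => u ω i) 2 μ)
    (hu₀ : meanV μ u = 0) (b : Fin d → ℝ) (m : ℝ) :
    ∫ ω, (a ⬝ᵥ z ω - m - b ⬝ᵥ u ω) ^ 2 ∂μ[|g ⁻¹' T] =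
      a ⬝ᵥ (covM μ[|g ⁻¹' T] z *ᵥ a) + (a ⬝ᵥ meanV μ[|g ⁻¹' T] z - m) ^ 2 +
        ∫ ω, (b ⬝ᵥ u ω) ^ 2 ∂μ := by
  have := cond_isProbabilityMeasure hT₀
  have hzT : ∀ i, MemLp (fun ω => z ω i) 2 μ[|g ⁻¹' T] := fun i => (hz i).cond
  have hbu : ∫ ω, b ⬝ᵥ u ω ∂μ = 0 := by
    rw [integral_dotProduct_s6 b fun i => (hu i).integrable one_le_two, hu₀, dotProduct_zero]
  calc ∫ ω, (a ⬝ᵥ z ω - m - b ⬝ᵥ u ω) ^ 2 ∂μ[|g ⁻¹' T]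
      = ∫ ω, (a ⬝ᵥ z ω - m) ^ 2 ∂μ[|g ⁻¹' T] + ∫ ω, (b ⬝ᵥ u ω) ^ 2 ∂μ :=
        hindep.integral_cond_sub_sq (S := Prod.snd ⁻¹' T) (φ := fun p => a ⬝ᵥ p.1 - m)
          ((aemeasurable_pi_lambda z fun i => (hz i).aemeasurable).prodMk hg.aemeasurable)
          (aemeasurable_pi_lambda u fun i => (hu i).aemeasurable) (measurable_snd hT) (hg hT) hT₀
          (by fun_prop) (by fun_prop) ((memLp_dotProduct_s6 a hz).sub (memLp_const m))
          (memLp_dotProduct_s6 b hu) hbu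
    _ = _ := by
      rw [integral_sub_const_sq (memLp_dotProduct_s6 a hzT),
        integral_dotProduct_s6 a fun i => (hzT i).integrable one_le_two, dotProduct_covM_mulVec a hzT]

end RandomVector

end

theorem stmt_6_general {Ω : Type*} [MeasurableSpace Ω] (P : Measure Ω) [IsProbabilityMeasure P]
    {d : ℕ} (z u x : Ω → Fin d → ℝ) (g y yhat : Ω → ℝ) (β : Fin d → ℝ) (α : ℝ)
    (Λ ΔSz : Matrix (Fin d) (Fin d) ℝ) (Δμz : Fin d → ℝ)
    (hgval : ∀ ω, g ω = 0 ∨ g ω = 1)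
    (hgmeas : Measurable g)
    (hppos : 0 < P (g ⁻¹' {1}) ∧ P (g ⁻¹' {1}) < 1)
    (hx : ∀ ω, x ω = fun i => z ω i + u ω i)
    (hy : ∀ ω, y ω = β ⬝ᵥ z ω + α)
    (hindep : IndepFun (fun ω => (z ω, g ω)) u P)
    (hzL2 : ∀ i, MemLp (fun ω => z ω i) 2 P)
    (huL2 : ∀ i, MemLp (fun ω => u ω i) 2 P)
    (hu0 : ∀ i, ∫ ω, u ω i ∂P = 0)
    (hΔ : ∀ i, Δμz i = (∫ ω, z ω i ∂(ProbabilityTheory.cond P (g ⁻¹' {1}))) -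
      ∫ ω, z ω i ∂(ProbabilityTheory.cond P (g ⁻¹' {0})))
    (hΔS : ΔSz = covM (ProbabilityTheory.cond P (g ⁻¹' {1})) z -
      covM (ProbabilityTheory.cond P (g ⁻¹' {0})) z)
    (hyhat : ∀ ω, yhat ω = ((1 - Λ) *ᵥ β) ⬝ᵥ x ω + (Λ *ᵥ β) ⬝ᵥ meanV P z + α) :
    |(∫ ω, (y ω - yhat ω) ^ 2 ∂(ProbabilityTheory.cond P (g ⁻¹' {1}))) -
        ∫ ω, (y ω - yhat ω) ^ 2 ∂(ProbabilityTheory.cond P (g ⁻¹' {0}))| =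
      |(Λ *ᵥ β) ⬝ᵥ (ΔSz *ᵥ (Λ *ᵥ β)) -
        ((P (g ⁻¹' {1})).toReal - (P (g ⁻¹' {0})).toReal) * ((Λ *ᵥ β) ⬝ᵥ Δμz) ^ 2| := by
  set a := Λ *ᵥ β
  set b := (1 - Λ) *ᵥ β
  have hres : ∀ ω, y ω - yhat ω = a ⬝ᵥ z ω - a ⬝ᵥ meanV P z - b ⬝ᵥ u ω := fun ω => by
    have hb : ∀ v, b ⬝ᵥ v = β ⬝ᵥ v - a ⬝ᵥ v := fun v => by
      simp only [b, a, sub_mulVec, one_mulVec, sub_dotProduct]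
    rw [hy, hyhat, show x ω = z ω + u ω from hx ω, dotProduct_add, hb, hb]
    ring
  have hA : MeasurableSet (g ⁻¹' {1}) := hgmeas (measurableSet_singleton 1)
  have hAc : g ⁻¹' {0} = (g ⁻¹' {1})ᶜ := by
    ext ω; rcases hgval ω with h | h <;> simp [h]
  have hAc₀ : P (g ⁻¹' {1})ᶜ ≠ 0 := by
    rw [prob_compl_eq_one_sub hA]
    exact (tsub_pos_of_lt hppos.2).ne'
  have hgroup := fun T hT hT₀ => integral_cond_sq_dotProduct_sub_sub_dotProduct a hindep hgmeas
    (T := T) hT hT₀ hzL2 huL2 (funext hu0) b (a ⬝ᵥ meanV P z)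
  simp only [hres]
  rw [hgroup _ (measurableSet_singleton 1) hppos.1.ne',
    hgroup _ (measurableSet_singleton 0) (hAc ▸ hAc₀), hΔS,
    show Δμz = meanV P[|g ⁻¹' {1}] z - meanV P[|g ⁻¹' {0}] z from funext hΔ, hAc, sub_mulVec,
    dotProduct_sub, dotProduct_sub,
    meanV_eq_measureReal_smul_meanV_cond_add hA fun i => (hzL2 i).integrable one_le_two,
    dotProduct_add, dotProduct_smul, dotProduct_smul, smul_eq_mul, smul_eq_mul,
    ← measureReal_def, ← measureReal_def,
    show P.real (g ⁻¹' {1})ᶜ = 1 - P.real (g ⁻¹' {1}) by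
      linarith [probReal_add_probReal_compl (μ := P) hA]]
  congr 1
  ring

/-- Two-group measurement-error model without group information: the statistical
loss discrepancy based on squared error equals
`|(Λβ)ᵀΔΣ_z(Λβ) - (P[g=1]-P[g=0])((Λβ)ᵀΔμ_z)²|`. -/
theorem stmt_6 {Ω : Type*} [MeasurableSpace Ω] (P : Measure Ω) [IsProbabilityMeasure P]
    {d : ℕ} (z u x : Ω → Fin d → ℝ) (g y yhat : Ω → ℝ) (β : Fin d → ℝ) (α : ℝ)
    (Λ ΔSz : Matrix (Fin d) (Fin d) ℝ) (Δμz : Fin d → ℝ)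
    (hgval : ∀ ω, g ω = 0 ∨ g ω = 1)
    (hgmeas : Measurable g)
    (hppos : 0 < P (g ⁻¹' {1}) ∧ P (g ⁻¹' {1}) < 1)
    (hx : ∀ ω, x ω = fun i => z ω i + u ω i)
    (hy : ∀ ω, y ω = β ⬝ᵥ z ω + α)
    (hindep : IndepFun (fun ω => (z ω, g ω)) u P)
    (hzL2 : ∀ i, MemLp (fun ω => z ω i) 2 P)
    (huL2 : ∀ i, MemLp (fun ω => u ω i) 2 P)
    (hu0 : ∀ i, ∫ ω, u ω i ∂P = 0)
    (hinv : IsUnit (covM P z + covM P u).det)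
    (hΛ : Λ = (covM P z + covM P u)⁻¹ * covM P u)
    (hΔ : ∀ i, Δμz i = (∫ ω, z ω i ∂(ProbabilityTheory.cond P (g ⁻¹' {1}))) -
      ∫ ω, z ω i ∂(ProbabilityTheory.cond P (g ⁻¹' {0})))
    (hΔS : ΔSz = covM (ProbabilityTheory.cond P (g ⁻¹' {1})) z -
      covM (ProbabilityTheory.cond P (g ⁻¹' {0})) z)
    (hyhat : ∀ ω, yhat ω = ((1 - Λ) *ᵥ β) ⬝ᵥ x ω + (Λ *ᵥ β) ⬝ᵥ meanV P z + α) :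
    |(∫ ω, (y ω - yhat ω) ^ 2 ∂(ProbabilityTheory.cond P (g ⁻¹' {1}))) -
        ∫ ω, (y ω - yhat ω) ^ 2 ∂(ProbabilityTheory.cond P (g ⁻¹' {0}))| =
      |(Λ *ᵥ β) ⬝ᵥ (ΔSz *ᵥ (Λ *ᵥ β)) -
        ((P (g ⁻¹' {1})).toReal - (P (g ⁻¹' {0})).toReal) * ((Λ *ᵥ β) ⬝ᵥ Δμz) ^ 2| :=
  stmt_6_general P z u x g y yhat β α Λ ΔSz Δμz hgval hgmeas hppos hx hy hindep hzL2 huL2 hu0 hΔ hΔS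
    hyhat
end

section
/- In the two-group measurement-error model with group membership included, the population least-squares predictor has zero expected residual within each group: E[y - ŷ | g=0] = E[y - ŷ | g=1] = 0. -/
open MeasureTheory ProbabilityTheory Matrix

/-! Write `v = Λ'β`. The residual `y - ŷ` equals `v ⬝ z - ((1 - Λ')β) ⬝ u - (v ⬝ Δμ_z) g - v ⬝ μ₀`.
Since `u` is centred and independent of `g`, it stays centred on each group `{g = b}`, and `g` is
constant there, so the mean residual on `{g = b}` is `v ⬝ (E[z | g = b] - μ₀ - b Δμ_z)`, which
vanishes for `b = 0` and `b = 1` by the choice of `μ₀` and `Δμ_z`. -/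

section

variable {Ω : Type*} [MeasurableSpace Ω]

theorem MeasureTheory.Integrable.cond {μ : Measure Ω} {f : Ω → ℝ} (hf : Integrable f μ)
    (s : Set Ω) : Integrable f μ[|s] := by
  by_cases hs : μ s = 0
  · simp [cond_eq_zero_of_meas_eq_zero hs]
  · exact hf.restrict.smul_measure (ENNReal.inv_ne_top.2 hs)

theorem integral_dotProduct_eq_dotProduct_meanV {μ : Measure Ω} {d : ℕ} (v : Fin d → ℝ)
    {z : Ω → Fin d → ℝ} (hz : ∀ i, Integrable (fun ω => z ω i) μ) :
    ∫ ω, v ⬝ᵥ z ω ∂μ = v ⬝ᵥ meanV μ z := by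
  simp only [dotProduct, meanV]
  rw [integral_finsetSum _ fun i _ => (hz i).const_mul _]
  exact Finset.sum_congr rfl fun i _ => integral_const_mul _ _

theorem setIntegral_preimage_eq_mul_integral_of_indepFun {β : Type*} [MeasurableSpace β]
    {P : Measure Ω} {g : Ω → β} {f : Ω → ℝ} (hg : Measurable g) (hf : AEStronglyMeasurable f P)
    (hgf : IndepFun g f P) {s : Set β} (hs : MeasurableSet s) :
    ∫ ω in g ⁻¹' s, f ω ∂P = P.real (g ⁻¹' s) * ∫ ω, f ω ∂P := by
  have hind : Measurable (s.indicator (1 : β → ℝ)) := measurable_const.indicator hs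
  have hprod : (g ⁻¹' s).indicator f = fun ω => s.indicator 1 (g ω) * f ω := by
    ext ω
    by_cases hω : g ω ∈ s <;> simp [Set.indicator, hω]
  have hone : (g ⁻¹' s).indicator (1 : Ω → ℝ) = fun ω => s.indicator 1 (g ω) :=
    funext fun ω => Set.indicator_comp_right g (s := s) (g := (1 : β → ℝ))
  have hmul : ∫ ω, s.indicator 1 (g ω) * f ω ∂P =
      (∫ ω, s.indicator 1 (g ω) ∂P) * ∫ ω, f ω ∂P :=
    (hgf.comp hind measurable_id).integral_fun_mul_eq_mul_integral
      (hind.comp hg).aestronglyMeasurable hf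
  rw [← integral_indicator (hg hs), hprod, hmul, ← hone, integral_indicator_one (hg hs)]

theorem integral_cond_preimage_of_indepFun {β : Type*} [MeasurableSpace β] {P : Measure Ω}
    [IsFiniteMeasure P] {g : Ω → β} {f : Ω → ℝ} (hg : Measurable g)
    (hf : AEStronglyMeasurable f P) (hgf : IndepFun g f P) {s : Set β} (hs : MeasurableSet s)
    (hs0 : P (g ⁻¹' s) ≠ 0) :
    ∫ ω, f ω ∂P[|g ⁻¹' s] = ∫ ω, f ω ∂P := by
  rw [ProbabilityTheory.cond, integral_smul_measure,
    setIntegral_preimage_eq_mul_integral_of_indepFun hg hf hgf hs, smul_eq_mul, ← mul_assoc,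
    ENNReal.toReal_inv, measureReal_def,
    inv_mul_cancel₀ (ENNReal.toReal_ne_zero.2 ⟨hs0, measure_ne_top _ _⟩), one_mul]

theorem integral_affine_of_meanV_eq_zero {μ : Measure Ω} [IsProbabilityMeasure μ] {d : ℕ}
    {z u : Ω → Fin d → ℝ} {g : Ω → ℝ} {b : ℝ} (hz : ∀ i, Integrable (fun ω => z ω i) μ)
    (hu : ∀ i, Integrable (fun ω => u ω i) μ) (hu0 : meanV μ u = 0) (hg : ∀ᵐ ω ∂μ, g ω = b)
    (v w : Fin d → ℝ) (c k : ℝ) :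
    ∫ ω, (v ⬝ᵥ z ω - w ⬝ᵥ u ω - c * g ω - k) ∂μ = v ⬝ᵥ meanV μ z - c * b - k := by
  have hvz : Integrable (fun ω => v ⬝ᵥ z ω) μ :=
    integrable_finsetSum _ fun i _ => (hz i).const_mul _
  have hwu : Integrable (fun ω => w ⬝ᵥ u ω) μ :=
    integrable_finsetSum _ fun i _ => (hu i).const_mul _
  have hcg : ∫ ω, c * g ω ∂μ = c * b := by
    rw [integral_congr_ae (hg.mono fun ω hω => by rw [hω])]
    simp
  have hcg_int : Integrable (fun ω => c * g ω) μ :=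
    (integrable_const (c * b)).congr (hg.mono fun ω hω => by simp [hω])
  have hvzwu : Integrable (fun ω => v ⬝ᵥ z ω - w ⬝ᵥ u ω) μ := hvz.sub hwu
  have hvzwucg : Integrable (fun ω => v ⬝ᵥ z ω - w ⬝ᵥ u ω - c * g ω) μ := hvzwu.sub hcg_int
  rw [integral_sub hvzwucg (integrable_const k), integral_sub hvzwu hcg_int, integral_sub hvz hwu,
    integral_dotProduct_eq_dotProduct_meanV v hz, integral_dotProduct_eq_dotProduct_meanV w hu,
    hu0, dotProduct_zero, hcg]
  simp

end

theorem stmt_9_general {Ω : Type*} [MeasurableSpace Ω] (P : Measure Ω) [IsProbabilityMeasure P]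
    {d : ℕ} (z u x : Ω → Fin d → ℝ) (g y yhat : Ω → ℝ) (β : Fin d → ℝ) (α : ℝ)
    (Λ' : Matrix (Fin d) (Fin d) ℝ) (Δμz μ0 : Fin d → ℝ)
    (hgmeas : Measurable g)
    (hx : ∀ ω, x ω = fun i => z ω i + u ω i)
    (hy : ∀ ω, y ω = β ⬝ᵥ z ω + α)
    (hindep : IndepFun (fun ω => (z ω, g ω)) u P)
    (hzL2 : ∀ i, MemLp (fun ω => z ω i) 2 P)
    (huL2 : ∀ i, MemLp (fun ω => u ω i) 2 P)
    (hu0 : ∀ i, ∫ ω, u ω i ∂P = 0)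
    (hμ0 : μ0 = meanV (ProbabilityTheory.cond P (g ⁻¹' {0})) z)
    (hΔ : ∀ i, Δμz i = meanV (ProbabilityTheory.cond P (g ⁻¹' {1})) z i - μ0 i)
    (hyhat : ∀ ω, yhat ω = ((1 - Λ') *ᵥ β) ⬝ᵥ x ω + ((Λ' *ᵥ β) ⬝ᵥ Δμz) * g ω +
      ((Λ' *ᵥ β) ⬝ᵥ μ0 + α)) :
    (∫ ω, (y ω - yhat ω) ∂(ProbabilityTheory.cond P (g ⁻¹' {0}))) = 0 ∧
      (∫ ω, (y ω - yhat ω) ∂(ProbabilityTheory.cond P (g ⁻¹' {1}))) = 0 := by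
  set v := Λ' *ᵥ β
  have hres : ∀ ω, y ω - yhat ω =
      v ⬝ᵥ z ω - ((1 - Λ') *ᵥ β) ⬝ᵥ u ω - (v ⬝ᵥ Δμz) * g ω - v ⬝ᵥ μ0 := by
    intro ω
    rw [hy, hyhat, hx, show (fun i => z ω i + u ω i) = z ω + u ω from rfl, sub_mulVec,
      one_mulVec, dotProduct_add, sub_dotProduct, sub_dotProduct]
    ring
  have hgroup : ∀ b, v ⬝ᵥ meanV P[|g ⁻¹' {b}] z - (v ⬝ᵥ Δμz) * b - v ⬝ᵥ μ0 = 0 →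
      ∫ ω, (y ω - yhat ω) ∂P[|g ⁻¹' {b}] = 0 := by
    intro b hb
    by_cases hb0 : P (g ⁻¹' {b}) = 0
    · simp [cond_eq_zero_of_meas_eq_zero hb0]
    have := cond_isProbabilityMeasure (s := g ⁻¹' {b}) hb0
    have hu0b : meanV P[|g ⁻¹' {b}] u = 0 := funext fun i =>
      (integral_cond_preimage_of_indepFun hgmeas (huL2 i).aestronglyMeasurable
        (hindep.comp measurable_snd (measurable_pi_apply i)) (measurableSet_singleton b) hb0).trans
        (hu0 i)
    rw [← hb, ← integral_affine_of_meanV_eq_zero (fun i => ((hzL2 i).integrable one_le_two).cond _)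
      (fun i => ((huL2 i).integrable one_le_two).cond _) hu0b
      (ae_cond_mem (hgmeas (measurableSet_singleton b)))]
    exact integral_congr_ae (ae_of_all _ hres)
  refine ⟨hgroup 0 (by rw [← hμ0]; ring), hgroup 1 ?_⟩
  have hmean : meanV P[|g ⁻¹' {1}] z = Δμz + μ0 := funext fun i => by
    rw [Pi.add_apply, hΔ]; ring
  rw [hmean, dotProduct_add]
  ring

/-- Two-group measurement-error model with group membership included: the
population least-squares predictor has zero expected residual within each
group. -/
theorem stmt_9 {Ω : Type*} [MeasurableSpace Ω] (P : Measure Ω) [IsProbabilityMeasure P]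
    {d : ℕ} (z u x : Ω → Fin d → ℝ) (g y yhat : Ω → ℝ) (β : Fin d → ℝ) (α : ℝ)
    (Λ' EVarz : Matrix (Fin d) (Fin d) ℝ) (Δμz μ0 : Fin d → ℝ)
    (hgval : ∀ ω, g ω = 0 ∨ g ω = 1)
    (hgmeas : Measurable g)
    (hppos : 0 < P (g ⁻¹' {1}) ∧ P (g ⁻¹' {1}) < 1)
    (hx : ∀ ω, x ω = fun i => z ω i + u ω i)
    (hy : ∀ ω, y ω = β ⬝ᵥ z ω + α)
    (hindep : IndepFun (fun ω => (z ω, g ω)) u P)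
    (hzL2 : ∀ i, MemLp (fun ω => z ω i) 2 P)
    (huL2 : ∀ i, MemLp (fun ω => u ω i) 2 P)
    (hu0 : ∀ i, ∫ ω, u ω i ∂P = 0)
    (hEVar : EVarz = (P (g ⁻¹' {1})).toReal • covM (ProbabilityTheory.cond P (g ⁻¹' {1})) z +
      (P (g ⁻¹' {0})).toReal • covM (ProbabilityTheory.cond P (g ⁻¹' {0})) z)
    (hinv : IsUnit (EVarz + covM P u).det)
    (hΛ : Λ' = (EVarz + covM P u)⁻¹ * covM P u)
    (hμ0 : μ0 = meanV (ProbabilityTheory.cond P (g ⁻¹' {0})) z)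
    (hΔ : ∀ i, Δμz i = meanV (ProbabilityTheory.cond P (g ⁻¹' {1})) z i - μ0 i)
    (hyhat : ∀ ω, yhat ω = ((1 - Λ') *ᵥ β) ⬝ᵥ x ω + ((Λ' *ᵥ β) ⬝ᵥ Δμz) * g ω +
      ((Λ' *ᵥ β) ⬝ᵥ μ0 + α)) :
    (∫ ω, (y ω - yhat ω) ∂(ProbabilityTheory.cond P (g ⁻¹' {0}))) = 0 ∧
      (∫ ω, (y ω - yhat ω) ∂(ProbabilityTheory.cond P (g ⁻¹' {1}))) = 0 :=
  stmt_9_general P z u x g y yhat β α Λ' Δμz μ0 hgmeas hx hy hindep hzL2 huL2 hu0 hμ0 hΔ hyhat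
end

section
/- There exists a two-group setting in which the counterfactual loss discrepancy is zero but the statistical loss discrepancy is nonzero, and another in which the statistical loss discrepancy is zero but the counterfactual loss discrepancy is nonzero; concretely, with two individual types z_1, z_2, group 0 having type proportions (1/4, 3/4) and group 1 having (3/4, 1/4): if losses are 1 on z_1 and 2 on z_2 regardless of group, then CLD = 0 and SLD = 1/2; if additionally the losses flip for group 1 (2 on z_1, 1 on z_2), then CLD = 1 and SLD = 0. -/
/-- Two individual types `z₁` (encoded `false`) and `z₂` (encoded `true`);
group 0 has type proportions `(1/4, 3/4)`, group 1 has `(3/4, 1/4)`, groups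
equally sized.  With group-independent losses `1` on `z₁` and `2` on `z₂`,
`CLD = 0` and `SLD = 1/2`; with the losses flipped for group 1 (`2` on `z₁`,
`1` on `z₂`), `CLD = 1` and `SLD = 0`.  Here, for a loss `L : type → group → ℝ`,
`SLD L = |∑ z p₁(z) L(z,1) - ∑ z p₀(z) L(z,0)|` and
`CLD L = ∑ z ((p₀(z)+p₁(z))/2) |L(z,1) - L(z,0)|`. -/
theorem stmt_17
    (p0 p1 : Bool → ℝ)
    (hp0 : p0 = fun z => if z then (3 : ℝ) / 4 else 1 / 4)
    (hp1 : p1 = fun z => if z then (1 : ℝ) / 4 else 3 / 4)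
    (SLD CLD : (Bool → Bool → ℝ) → ℝ)
    (hSLD : ∀ L, SLD L = |(∑ z : Bool, p1 z * L z true) - ∑ z : Bool, p0 z * L z false|)
    (hCLD : ∀ L, CLD L = ∑ z : Bool, (p0 z + p1 z) / 2 * |L z true - L z false|)
    (L L' : Bool → Bool → ℝ)
    (hL : L = fun z _ => if z then (2 : ℝ) else 1)
    (hL' : L' = fun z g => if z = g then (1 : ℝ) else 2) :
    CLD L = 0 ∧ SLD L = 1 / 2 ∧ CLD L' = 1 ∧ SLD L' = 0 := by
  subst hp0 hp1 hL hL'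
  simp only [hSLD, hCLD, Fintype.sum_bool]
  norm_num [abs_of_nonneg, abs_of_nonpos]
end
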